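/- Let d ≥ 1 be an integer and let δ be real with max(0, 1 − d/4) < δ ≤ 1. There exist κ > 0 and C > 0, depending only on d and δ, such that for all real t, u with 0 < t < u ≤ 2t and u < 1, one has ∑_{n ∈ ℤ^d, n₁ > 0} (u^δ e^{−2|n|² u} − t^δ e^{−2|n|² t})² · n₁² · |n|^{2−2d} ≤ C (u−t)^κ. -/

import Mathlib

/-!
Write `f_R(t) = t^δ e^{-2Rt}` with `R = |n|²`. Splitting
`f_R(u) - f_R(t) = (u^δ - t^δ) e^{-2Rt} - u^δ (e^{-2Rt} - e^{-2Ru})` and using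
`u^δ - t^δ ≤ (u - t)^δ` and `1 - e^{-x} ≤ x^θ` gives
`|f_R(u) - f_R(t)| ≤ 5 (R(u - t))^θ t^{δ-θ} e^{-2Rt}` for `0 ≤ θ ≤ δ`. Squaring and trading
the exponential for a power, `e^{-x} ≤ a^a x^{-a}` with `a = 2(δ - θ)`, removes `t` and bounds
the summand by a multiple of `(u - t)^{2θ} |n|^{-s}` with `s = 4δ + 2d - 4 - 8θ`. As
`δ > 1 - d/4`, a small `θ > 0` gives `s > d`, and `∑ |n|^{-s}` converges over the lattice `ℤ^d`.
-/

open scoped BigOperators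

/-- Euclidean norm of a lattice point `n ∈ ℤ^d`, viewed in `ℝ^d`. -/
noncomputable def znorm {d : ℕ} (n : Fin d → ℤ) : ℝ :=
  Real.sqrt (∑ i, ((n i : ℝ)) ^ 2)

namespace Real

theorem exp_neg_le_rpow_mul_rpow_neg {a x : ℝ} (ha : 0 < a) (hx : 0 < x) :
    exp (-x) ≤ a ^ a * x ^ (-a) := by
  have h : (x / a) ^ a ≤ exp x :=
    calc (x / a) ^ a ≤ exp (x / a) ^ a :=
          rpow_le_rpow (by positivity) (by linarith [add_one_le_exp (x / a)]) ha.le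
      _ = exp x := by rw [← exp_mul, div_mul_cancel₀ _ ha.ne']
  rw [div_rpow hx.le ha.le, div_le_iff₀ (by positivity)] at h
  rw [exp_neg, rpow_neg hx.le, ← div_eq_mul_inv, le_div_iff₀ (by positivity)]
  calc (exp x)⁻¹ * x ^ a ≤ (exp x)⁻¹ * (exp x * a ^ a) := by gcongr
    _ = a ^ a := by field_simp

theorem one_sub_exp_neg_le_rpow {x θ : ℝ} (hx : 0 ≤ x) (hθ0 : 0 ≤ θ) (hθ1 : θ ≤ 1) :
    1 - exp (-x) ≤ x ^ θ := by
  rcases le_total x 1 with h | h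
  · calc 1 - exp (-x) ≤ x := by linarith [add_one_le_exp (-x)]
      _ ≤ x ^ θ := by simpa using rpow_le_rpow_of_exponent_ge' hx h hθ0 hθ1
  · linarith [one_le_rpow h hθ0, exp_pos (-x)]

theorem mul_rpow_le_mul_rpow_of_le_one {c y p : ℝ} (hc : 1 ≤ c) (hy : 0 ≤ y) (hp : p ≤ 1) :
    (c * y) ^ p ≤ c * y ^ p := by
  rw [mul_rpow (by linarith) hy]
  gcongr
  simpa using rpow_le_rpow_of_exponent_le hc hp

end Real

open Real

section Increment

variable {δ θ R t u : ℝ}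

theorem abs_rpow_sub_rpow_le (hθ0 : 0 ≤ θ) (hθδ : θ ≤ δ) (hδ : δ ≤ 1)
    (ht : 0 < t) (htu : t < u) (hu : u ≤ 2 * t) :
    |u ^ δ - t ^ δ| ≤ (u - t) ^ θ * t ^ (δ - θ) := by
  have hut : 0 < u - t := by linarith
  rw [abs_of_nonneg (by linarith [rpow_le_rpow ht.le htu.le (hθ0.trans hθδ)])]
  calc u ^ δ - t ^ δ ≤ (u - t) ^ δ := by
        have := rpow_add_le_add_rpow ht.le hut.le (hθ0.trans hθδ) hδ
        rw [add_sub_cancel] at this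
        linarith
    _ = (u - t) ^ θ * (u - t) ^ (δ - θ) := by rw [← rpow_add hut, add_sub_cancel]
    _ ≤ (u - t) ^ θ * t ^ (δ - θ) := by gcongr; linarith

theorem exp_sub_exp_le_rpow_mul_exp (hR : 0 ≤ R) (htu : t ≤ u) (hθ0 : 0 ≤ θ)
    (hθ1 : θ ≤ 1) :
    exp (-2 * R * t) - exp (-2 * R * u) ≤ (2 * R * (u - t)) ^ θ * exp (-2 * R * t) := by
  have hx : 0 ≤ 2 * R * (u - t) := by have := sub_nonneg.2 htu; positivity
  calc exp (-2 * R * t) - exp (-2 * R * u)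
      = (1 - exp (-(2 * R * (u - t)))) * exp (-2 * R * t) := by
        rw [sub_mul, one_mul, ← exp_add]; ring_nf
    _ ≤ _ := by gcongr; exact one_sub_exp_neg_le_rpow hx hθ0 hθ1

theorem abs_rpow_mul_exp_sub_le (hθ0 : 0 ≤ θ) (hθδ : θ ≤ δ) (hδ : δ ≤ 1)
    (hR : 1 ≤ R) (ht : 0 < t) (htu : t < u) (hu2 : u ≤ 2 * t) (hu1 : u ≤ 1) :
    |u ^ δ * exp (-2 * R * u) - t ^ δ * exp (-2 * R * t)|
      ≤ 5 * (R * (u - t)) ^ θ * t ^ (δ - θ) * exp (-2 * R * t) := by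
  have hE : 0 ≤ exp (-2 * R * t) - exp (-2 * R * u) := by
    have := exp_le_exp.2 (show -2 * R * u ≤ -2 * R * t by nlinarith)
    linarith
  have hu : u ^ δ ≤ 2 * t ^ (δ - θ) :=
    calc u ^ δ ≤ (2 * t) ^ δ := rpow_le_rpow (by linarith) hu2 (hθ0.trans hθδ)
      _ ≤ 2 * t ^ δ := mul_rpow_le_mul_rpow_of_le_one one_le_two ht.le hδ
      _ ≤ 2 * t ^ (δ - θ) := by
        gcongr 2 * ?_; exact rpow_le_rpow_of_exponent_ge ht (by linarith) (by linarith)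
  calc |u ^ δ * exp (-2 * R * u) - t ^ δ * exp (-2 * R * t)|
      = |(u ^ δ - t ^ δ) * exp (-2 * R * t)
          - u ^ δ * (exp (-2 * R * t) - exp (-2 * R * u))| := by ring_nf
    _ ≤ |u ^ δ - t ^ δ| * exp (-2 * R * t)
          + u ^ δ * (exp (-2 * R * t) - exp (-2 * R * u)) := by
        refine (abs_sub _ _).trans_eq ?_
        rw [abs_mul, abs_of_pos (exp_pos _),
          abs_of_nonneg (mul_nonneg (rpow_nonneg (by linarith) _) hE)]
    _ ≤ (u - t) ^ θ * t ^ (δ - θ) * exp (-2 * R * t)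
          + 2 * t ^ (δ - θ) * ((2 * (R * (u - t))) ^ θ * exp (-2 * R * t)) := by
        gcongr
        · exact abs_rpow_sub_rpow_le hθ0 hθδ hδ ht htu hu2
        · rw [← mul_assoc]
          exact exp_sub_exp_le_rpow_mul_exp (by linarith) htu.le hθ0 (hθδ.trans hδ)
    _ ≤ (R * (u - t)) ^ θ * t ^ (δ - θ) * exp (-2 * R * t)
          + 2 * t ^ (δ - θ) * ((2 * (R * (u - t)) ^ θ) * exp (-2 * R * t)) := by
        gcongr
        · nlinarith
        · exact mul_rpow_le_mul_rpow_of_le_one one_le_two (by positivity) (hθδ.trans hδ)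
    _ = 5 * (R * (u - t)) ^ θ * t ^ (δ - θ) * exp (-2 * R * t) := by ring

theorem sq_rpow_mul_exp_sub_le (hθ0 : 0 ≤ θ) (hθδ : θ < δ) (hδ : δ ≤ 1)
    (hR : 1 ≤ R) (ht : 0 < t) (htu : t < u) (hu2 : u ≤ 2 * t) (hu1 : u ≤ 1) :
    (u ^ δ * exp (-2 * R * u) - t ^ δ * exp (-2 * R * t)) ^ 2
      ≤ 25 * (2 * (δ - θ)) ^ (2 * (δ - θ)) * (u - t) ^ (2 * θ) * R ^ (4 * θ - 2 * δ) := by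
  set a := 2 * (δ - θ)
  have hR0 : 0 < R := by linarith
  have hut : 0 ≤ u - t := by linarith
  have hexp : exp (-2 * R * t) ^ 2 ≤ a ^ a * (R * t) ^ (-a) :=
    calc exp (-2 * R * t) ^ 2 ≤ exp (-(R * t)) := by
          rw [← exp_nat_mul]; gcongr; push_cast; nlinarith [mul_pos hR0 ht]
      _ ≤ a ^ a * (R * t) ^ (-a) :=
          exp_neg_le_rpow_mul_rpow_neg (by unfold a; linarith) (by positivity)
  have hRu : ((R * (u - t)) ^ θ) ^ 2 = R ^ (2 * θ) * (u - t) ^ (2 * θ) := by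
    rw [← rpow_mul_natCast (by positivity), mul_rpow hR0.le hut]; ring_nf
  have ht_cancel : (t ^ (δ - θ)) ^ 2 * (R * t) ^ (-a) = R ^ (-a) := by
    rw [← rpow_mul_natCast ht.le, mul_rpow hR0.le ht.le, rpow_neg ht.le,
      show (δ - θ) * (2 : ℕ) = a by push_cast; ring]
    field_simp [(rpow_pos_of_pos ht a).ne']
  have hR_pow : R ^ (2 * θ) * R ^ (-a) = R ^ (4 * θ - 2 * δ) := by
    rw [← rpow_add hR0]; congr 1; ring
  calc (u ^ δ * exp (-2 * R * u) - t ^ δ * exp (-2 * R * t)) ^ 2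
      = |u ^ δ * exp (-2 * R * u) - t ^ δ * exp (-2 * R * t)| ^ 2 := (sq_abs _).symm
    _ ≤ (5 * (R * (u - t)) ^ θ * t ^ (δ - θ) * exp (-2 * R * t)) ^ 2 :=
        pow_le_pow_left₀ (abs_nonneg _)
          (abs_rpow_mul_exp_sub_le hθ0 hθδ.le hδ hR ht htu hu2 hu1) 2
    _ = 25 * ((R * (u - t)) ^ θ) ^ 2 * (t ^ (δ - θ)) ^ 2 * exp (-2 * R * t) ^ 2 := by ring
    _ ≤ 25 * ((R * (u - t)) ^ θ) ^ 2 * (t ^ (δ - θ)) ^ 2 * (a ^ a * (R * t) ^ (-a)) := by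
        gcongr
    _ = 25 * a ^ a * (u - t) ^ (2 * θ) * R ^ (4 * θ - 2 * δ) := by
        rw [hRu, ← hR_pow, ← ht_cancel]; ring

theorem sq_rpow_mul_exp_sub_mul_rpow_le {r c : ℝ} (q : ℝ) (hθ0 : 0 ≤ θ) (hθδ : θ < δ)
    (hδ : δ ≤ 1) (hr : 1 ≤ r) (hc : |c| ≤ r) (ht : 0 < t) (htu : t < u)
    (hu2 : u ≤ 2 * t) (hu1 : u ≤ 1) :
    (u ^ δ * exp (-2 * r ^ 2 * u) - t ^ δ * exp (-2 * r ^ 2 * t)) ^ 2 * c ^ 2 * r ^ q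
      ≤ 25 * (2 * (δ - θ)) ^ (2 * (δ - θ)) * (u - t) ^ (2 * θ)
          * r ^ (8 * θ - 4 * δ + 2 + q) := by
  have hr0 : 0 < r := by linarith
  calc (u ^ δ * exp (-2 * r ^ 2 * u) - t ^ δ * exp (-2 * r ^ 2 * t)) ^ 2 * c ^ 2 * r ^ q
      ≤ 25 * (2 * (δ - θ)) ^ (2 * (δ - θ)) * (u - t) ^ (2 * θ) * (r ^ 2) ^ (4 * θ - 2 * δ)
          * r ^ 2 * r ^ q := by
        refine mul_le_mul_of_nonneg_right (mul_le_mul ?_ ?_ (sq_nonneg c) (by positivity))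
          (rpow_nonneg hr0.le q)
        · exact sq_rpow_mul_exp_sub_le hθ0 hθδ hδ (one_le_pow₀ hr) ht htu hu2 hu1
        · exact sq_le_sq.2 (hc.trans (le_abs_self r))
    _ = _ := by
        rw [← rpow_natCast_mul hr0.le, ← rpow_two, mul_assoc _ (r ^ (2 : ℝ)), mul_assoc,
          ← rpow_add hr0, ← rpow_add hr0]
        congr 2; push_cast; ring

end Increment

theorem znorm_nonneg {d : ℕ} (n : Fin d → ℤ) : 0 ≤ znorm n :=
  sqrt_nonneg _

theorem abs_le_znorm {d : ℕ} (n : Fin d → ℤ) (i : Fin d) : |(n i : ℝ)| ≤ znorm n :=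
  abs_le_sqrt <| Finset.single_le_sum (f := fun j => (n j : ℝ) ^ 2)
    (fun _ _ => sq_nonneg _) (Finset.mem_univ i)

theorem one_le_znorm {d : ℕ} {n : Fin d → ℤ} {i : Fin d} (hi : n i ≠ 0) : 1 ≤ znorm n :=
  le_trans (by exact_mod_cast Int.one_le_abs hi) (abs_le_znorm n i)

theorem summable_znorm_rpow_neg {d : ℕ} {s : ℝ} (hs : (d : ℝ) < s) :
    Summable fun n : Fin d → ℤ => znorm n ^ (-s) := by
  let b := (EuclideanSpace.basisFun (Fin d) ℝ).toBasis
  let L := Submodule.span ℤ (Set.range b)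
  let ι : (Fin d → ℤ) → L := fun n =>
    ⟨∑ i, n i • b i, Submodule.sum_mem _ fun i _ =>
      zsmul_mem (Submodule.subset_span (Set.mem_range_self i)) _⟩
  have hι : Function.Injective ι := by
    intro n m h
    ext i
    simpa [ι, b] using congrFun (congrArg (⇑) (congrArg (fun x : L => b.repr x) h)) i
  have hnorm : ∀ n, ‖(ι n : EuclideanSpace ℝ (Fin d))‖ = znorm n := by
    intro n
    simp [ι, b, znorm, EuclideanSpace.norm_eq, Pi.single_apply]
  have hrank : Module.finrank ℤ L = d := by
    rw [ZLattice.rank ℝ L]; simp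
  have := (ZLattice.summable_norm_rpow L (-s) (by rw [hrank]; linarith)).comp_injective hι
  simpa [Function.comp_def, hnorm] using this

theorem tsum_le_mul_tsum {ι : Type*} {f g : ι → ℝ} {c : ℝ} (hf : ∀ i, 0 ≤ f i)
    (hfg : ∀ i, f i ≤ c * g i) (hg : Summable g) : ∑' i, f i ≤ c * ∑' i, g i := by
  have hcg := hg.mul_left c
  exact (Summable.tsum_le_tsum hfg (hcg.of_nonneg_of_le hf hfg) hcg).trans_eq tsum_mul_left

theorem stmt9 (d : ℕ) (hd : 0 < d) (δ : ℝ)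
    (hδ1 : max 0 (1 - (d : ℝ) / 4) < δ) (hδ2 : δ ≤ 1) :
    ∃ κ : ℝ, 0 < κ ∧ ∃ C : ℝ, 0 < C ∧
      ∀ t u : ℝ, 0 < t → t < u → u ≤ 2 * t → u < 1 →
        ∑' n : {n : Fin d → ℤ // 0 < n ⟨0, hd⟩},
            (u ^ δ * Real.exp (-2 * znorm n.1 ^ 2 * u)
              - t ^ δ * Real.exp (-2 * znorm n.1 ^ 2 * t)) ^ 2
            * ((n.1 ⟨0, hd⟩ : ℤ) : ℝ) ^ 2 * znorm n.1 ^ ((2 : ℝ) - 2 * d)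
          ≤ C * (u - t) ^ κ := by
  obtain ⟨θ, hθ0, hθδ, hs⟩ :
      ∃ θ : ℝ, 0 < θ ∧ θ < δ ∧ (d : ℝ) < 4 * δ + 2 * d - 4 - 8 * θ := by
    refine ⟨(δ - max 0 (1 - (d : ℝ) / 4)) / 4, ?_, ?_, ?_⟩ <;>
      linarith [le_max_left 0 (1 - (d : ℝ) / 4), le_max_right 0 (1 - (d : ℝ) / 4)]
  set s := 4 * δ + 2 * d - 4 - 8 * θ with hs_def
  set C₀ := 25 * (2 * (δ - θ)) ^ (2 * (δ - θ))
  have hC₀ : 0 < C₀ := by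
    have := rpow_pos_of_pos (by linarith : 0 < 2 * (δ - θ)) (2 * (δ - θ)); positivity
  set T := ∑' n : {n : Fin d → ℤ // 0 < n ⟨0, hd⟩}, znorm n.1 ^ (-s)
  have hT : 0 ≤ T := tsum_nonneg fun n => rpow_nonneg (znorm_nonneg _) _
  refine ⟨2 * θ, by positivity, C₀ * (T + 1), by positivity, fun t u ht htu hu2 hu1 => ?_⟩
  have hut := rpow_nonneg (sub_nonneg.2 htu.le) (2 * θ)
  calc _ ≤ C₀ * (u - t) ^ (2 * θ) * T :=
        tsum_le_mul_tsum (fun n => mul_nonneg (by positivity) (rpow_nonneg (znorm_nonneg _) _))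
          (fun n => by
            convert sq_rpow_mul_exp_sub_mul_rpow_le ((2 : ℝ) - 2 * d) hθ0.le hθδ hδ2
              (one_le_znorm n.2.ne') (abs_le_znorm n.1 _) ht htu hu2 hu1.le using 2
            congr 1; rw [hs_def]; ring)
          ((summable_znorm_rpow_neg hs).subtype _)
    _ ≤ C₀ * (T + 1) * (u - t) ^ (2 * θ) := by nlinarith
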